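/- Let S be a finite set with r elements and let v : Set S → ℕ satisfy v(C) ≥ 1 for all C and |v(C') - v(C)| ≤ 1 whenever C' and C differ by a single element. Define the Laurent polynomial ⟨L⟩ = ∑_{C ⊆ S} (-A² - A⁻²)^{v(C) - 1} · A^{2|C| - r} in ℤ[A, A⁻¹]. If ⟨L⟩ ≠ 0, then its span (top degree minus low degree) satisfies span(⟨L⟩) ≤ 2·v(S) + 2·v(∅) + 2r - 4. -/

import Mathlib

set_option maxHeartbeats 1000000


open LaurentPolynomial

private lemma supp_base (b : ℤ) (hb : b ∈ ((-T 2 - T (-2) : LaurentPolynomial ℤ)).coeff.support) :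
    b = 2 ∨ b = -2 := by
  have h1 : ((-T 2 - T (-2) : LaurentPolynomial ℤ)).coeff.support ⊆
      (-T 2 : LaurentPolynomial ℤ).coeff.support ∪ (T (-2) : LaurentPolynomial ℤ).coeff.support :=
    Finsupp.support_sub
  have h2 := h1 hb
  rw [Finset.mem_union, AddMonoidAlgebra.coeff_neg, Finsupp.support_neg] at h2
  have hT : ∀ n : ℤ, (T n : LaurentPolynomial ℤ).coeff.support ⊆ {n} := fun n =>
    Finsupp.support_single_subset
  rcases h2 with h | h
  · exact Or.inl (Finset.mem_singleton.1 (hT 2 h))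
  · exact Or.inr (Finset.mem_singleton.1 (hT (-2) h))

private lemma pow_bound (n : ℕ) :
    ∀ k ∈ ((-T 2 - T (-2) : LaurentPolynomial ℤ) ^ n).coeff.support,
      -(2 * (n : ℤ)) ≤ k ∧ k ≤ 2 * n := by
  induction n with
  | zero =>
    intro k hk
    rw [pow_zero, ← T_zero] at hk
    have hk0 : k = 0 := Finset.mem_singleton.1 (Finsupp.support_single_subset hk)
    simp [hk0]
  | succ n ih =>
    intro k hk
    rw [pow_succ] at hk
    have hsub := AddMonoidAlgebra.support_coeff_mul_subset
      ((-T 2 - T (-2) : LaurentPolynomial ℤ) ^ n) (-T 2 - T (-2)) hk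
    obtain ⟨a, ha, b, hb, rfl⟩ := Finset.mem_add.1 hsub
    obtain ⟨ha1, ha2⟩ := ih a ha
    rcases supp_base b hb with rfl | rfl <;> constructor <;> push_cast <;> linarith

/-- the span of the bracket state-sum
`⟨L⟩ = ∑_{C ⊆ S} (-A² - A⁻²)^{v(C)-1} · A^{2|C| - r}` is at most
`2·v(S) + 2·v(∅) + 2r - 4`, where `v` takes values `≥ 1` and changes by at most 1
when a single element of the state is toggled. -/
theorem stmt_1 {S : Type*} [Fintype S] [DecidableEq S] (v : Finset S → ℕ)
    (h1 : ∀ C : Finset S, 1 ≤ v C)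
    (h2 : ∀ (C : Finset S) (a : S), a ∉ C → |(v (insert a C) : ℤ) - (v C : ℤ)| ≤ 1)
    (bracket : LaurentPolynomial ℤ)
    (hbr : bracket = ∑ C : Finset S,
      (-T 2 - T (-2) : LaurentPolynomial ℤ) ^ (v C - 1) *
        T (2 * (C.card : ℤ) - (Fintype.card S : ℤ)))
    (hne : bracket.coeff.support.Nonempty) :
    bracket.coeff.support.max' hne - bracket.coeff.support.min' hne ≤
      2 * (v Finset.univ : ℤ) + 2 * (v ∅ : ℤ) + 2 * (Fintype.card S : ℤ) - 4 := by
  have hr : (0:ℤ) ≤ (Fintype.card S : ℤ) := Int.natCast_nonneg _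
  -- monotonicity lemma A : v C + |C| ≤ v univ + r
  have lemA : ∀ n : ℕ, ∀ C : Finset S, Cᶜ.card = n →
      (v C : ℤ) + C.card ≤ (v Finset.univ : ℤ) + (Fintype.card S : ℤ) := by
    intro n
    induction n with
    | zero =>
      intro C hC
      have : C = Finset.univ := by
        rw [Finset.card_eq_zero] at hC
        have := congrArg (·ᶜ) hC
        simpa using this
      subst this
      simp [Finset.card_univ]
    | succ n ih =>
      intro C hC
      have hne' : Cᶜ.Nonempty := by rw [← Finset.card_pos, hC]; omega
      obtain ⟨a, ha⟩ := hne'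
      have haC : a ∉ C := Finset.mem_compl.1 ha
      have hcard : (insert a C)ᶜ.card = n := by
        rw [Finset.compl_insert, Finset.card_erase_of_mem ha, hC]
        omega
      have hstep : (v C : ℤ) ≤ (v (insert a C) : ℤ) + 1 := by
        have := abs_le.1 (h2 C a haC); linarith [this.1]
      have := ih (insert a C) hcard
      rw [Finset.card_insert_of_notMem haC] at this
      push_cast at this ⊢
      linarith
  -- monotonicity lemma B : v C - |C| ≤ v ∅
  have lemB : ∀ n : ℕ, ∀ C : Finset S, C.card = n →
      (v C : ℤ) - C.card ≤ (v ∅ : ℤ) := by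
    intro n
    induction n with
    | zero =>
      intro C hC
      rw [Finset.card_eq_zero] at hC
      subst hC; simp
    | succ n ih =>
      intro C hC
      have hne' : C.Nonempty := by rw [← Finset.card_pos, hC]; omega
      obtain ⟨a, ha⟩ := hne'
      have haC : a ∉ C.erase a := Finset.notMem_erase a C
      have hins : insert a (C.erase a) = C := Finset.insert_erase ha
      have hstep : (v C : ℤ) ≤ (v (C.erase a) : ℤ) + 1 := by
        have := abs_le.1 (h2 (C.erase a) a haC)
        rw [hins] at this
        linarith [this.1]
      have hcard : (C.erase a).card = n := by
        rw [Finset.card_erase_of_mem ha, hC]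
        omega
      have := ih (C.erase a) hcard
      rw [hcard] at this
      rw [hC]
      push_cast at this ⊢
      linarith
  -- bounds on each element of the support
  have key : ∀ k ∈ bracket.coeff.support,
      -(2 * (v ∅ : ℤ)) + 2 - (Fintype.card S : ℤ) ≤ k ∧ k ≤ 2 * (v Finset.univ : ℤ) + (Fintype.card S : ℤ) - 2 := by
    intro k hk
    rw [hbr, AddMonoidAlgebra.coeff_sum] at hk
    obtain ⟨C, -, hkC⟩ := Finsupp.mem_support_finset_sum k hk
    have hsub := AddMonoidAlgebra.support_coeff_mul_subset
      ((-T 2 - T (-2) : LaurentPolynomial ℤ) ^ (v C - 1))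
      (T (2 * (C.card : ℤ) - (Fintype.card S : ℤ))) hkC
    obtain ⟨a, ha, b, hb, rfl⟩ := Finset.mem_add.1 hsub
    have hbm : b = 2 * (C.card : ℤ) - (Fintype.card S : ℤ) :=
      Finset.mem_singleton.1 (Finsupp.support_single_subset hb)
    obtain ⟨ha1, ha2⟩ := pow_bound (v C - 1) a ha
    have hcast : ((v C - 1 : ℕ) : ℤ) = (v C : ℤ) - 1 := by
      have := h1 C; omega
    rw [hcast] at ha1 ha2
    have hA := lemA Cᶜ.card C rfl
    have hB := lemB C.card C rfl
    subst hbm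
    constructor <;> linarith
  have hmax : bracket.coeff.support.max' hne ≤ 2 * (v Finset.univ : ℤ) + (Fintype.card S : ℤ) - 2 :=
    Finset.max'_le _ _ _ fun k hk => (key k hk).2
  have hmin : -(2 * (v ∅ : ℤ)) + 2 - (Fintype.card S : ℤ) ≤ bracket.coeff.support.min' hne :=
    Finset.le_min' _ _ _ fun k hk => (key k hk).1
  linarith
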